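/- arXiv:2109.01613 — 3 statements merged into one kernel-verified Lean document; each statement's English description precedes it below -/
import Mathlib

section
/- Let U, V, X, Y, Z be random variables on finite spaces forming a Markov chain U → V → X → (Y,Z). Then I(Y;V|U) − I(Z;V|U) + H(X|Z,V) = H(X|Z,U) − I(X;V|Y,U). -/
open scoped BigOperators Classical

variable {Ω : Type} [Fintype Ω]

/-- Probability that the random variable `X` takes the value `x` under the pmf `p`. -/
noncomputable def prEq {α : Type} (p : Ω → ℝ) (X : Ω → α) (x : α) : ℝ :=
  ∑ ω, if X ω = x then p ω else 0

/-- Shannon entropy of a finite random variable. -/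
noncomputable def ent {α : Type} [Fintype α] (p : Ω → ℝ) (X : Ω → α) : ℝ :=
  ∑ x, Real.negMulLog (prEq p X x)

/-- Conditional Shannon entropy `H(X | Y)`. -/
noncomputable def condEnt {α β : Type} [Fintype α] [Fintype β]
    (p : Ω → ℝ) (X : Ω → α) (Y : Ω → β) : ℝ :=
  ent p (fun ω => (X ω, Y ω)) - ent p Y

/-- Mutual information `I(X ; Y)`. -/
noncomputable def mutInf {α β : Type} [Fintype α] [Fintype β]
    (p : Ω → ℝ) (X : Ω → α) (Y : Ω → β) : ℝ :=
  ent p X + ent p Y - ent p (fun ω => (X ω, Y ω))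

/-- Conditional mutual information `I(X ; Y | Z)`. -/
noncomputable def condMutInf {α β γ : Type} [Fintype α] [Fintype β] [Fintype γ]
    (p : Ω → ℝ) (X : Ω → α) (Y : Ω → β) (Z : Ω → γ) : ℝ :=
  condEnt p X Z - condEnt p X (fun ω => (Y ω, Z ω))

/-- `X` and `Y` are conditionally independent given `Z`. -/
def CondIndep {α β γ : Type} (p : Ω → ℝ) (X : Ω → α) (Y : Ω → β) (Z : Ω → γ) : Prop :=
  ∀ x y z,
    prEq p (fun ω => (X ω, Y ω, Z ω)) (x, y, z) * prEq p Z z =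
      prEq p (fun ω => (X ω, Z ω)) (x, z) * prEq p (fun ω => (Y ω, Z ω)) (y, z)

/-- `X` and `Y` are independent. -/
def Indep {α β : Type} (p : Ω → ℝ) (X : Ω → α) (Y : Ω → β) : Prop :=
  ∀ x y, prEq p (fun ω => (X ω, Y ω)) (x, y) = prEq p X x * prEq p Y y

/-- `p` is a probability mass function on `Ω`. -/
def IsPMF (p : Ω → ℝ) : Prop := (∀ ω, 0 ≤ p ω) ∧ ∑ ω, p ω = 1


lemma prEq_nonneg {α : Type} (p : Ω → ℝ) (hp : ∀ ω, 0 ≤ p ω) (X : Ω → α) (x : α) :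
    0 ≤ prEq p X x := by
  refine Finset.sum_nonneg fun ω _ => ?_
  split
  · exact hp ω
  · exact le_refl 0

lemma sum_prEq_pair {α β : Type} [Fintype α] (p : Ω → ℝ) (X : Ω → α) (Y : Ω → β) (y : β) :
    ∑ x, prEq p (fun ω => (X ω, Y ω)) (x, y) = prEq p Y y := by
  unfold prEq
  rw [Finset.sum_comm]
  refine Finset.sum_congr rfl fun ω _ => ?_
  by_cases h : Y ω = y <;> simp [Prod.ext_iff, h, Finset.sum_ite_eq]

lemma sum_prEq_fst3 {α β γ : Type} [Fintype α] (p : Ω → ℝ)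
    (A : Ω → α) (B : Ω → β) (C : Ω → γ) (b : β) (c : γ) :
    ∑ a, prEq p (fun ω => (A ω, B ω, C ω)) (a, b, c) = prEq p (fun ω => (B ω, C ω)) (b, c) := by
  unfold prEq
  rw [Finset.sum_comm]
  refine Finset.sum_congr rfl fun ω _ => ?_
  by_cases h : B ω = b ∧ C ω = c <;> simp [Prod.ext_iff, h, Finset.sum_ite_eq] <;> tauto

lemma sum_prEq_snd3 {α β γ : Type} [Fintype β] (p : Ω → ℝ)
    (A : Ω → α) (B : Ω → β) (C : Ω → γ) (a : α) (c : γ) :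
    ∑ b, prEq p (fun ω => (A ω, B ω, C ω)) (a, b, c) = prEq p (fun ω => (A ω, C ω)) (a, c) := by
  unfold prEq
  rw [Finset.sum_comm]
  refine Finset.sum_congr rfl fun ω _ => ?_
  by_cases h : A ω = a ∧ C ω = c
  · simp [Prod.ext_iff, h, Finset.sum_ite_eq]
  · rw [if_neg (by simp only [Prod.mk.injEq]; tauto)]
    refine Finset.sum_eq_zero fun b _ => ?_
    rw [if_neg (by simp only [Prod.mk.injEq]; tauto)]

lemma prEq_comp_fst2 {β β' γ : Type} [Fintype β] (p : Ω → ℝ)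
    (B : Ω → β) (C : Ω → γ) (g : β → β') (y : β') (z : γ) :
    prEq p (fun ω => (g (B ω), C ω)) (y, z)
      = ∑ b ∈ Finset.univ.filter (fun b => g b = y), prEq p (fun ω => (B ω, C ω)) (b, z) := by
  unfold prEq
  rw [Finset.sum_comm]
  refine Finset.sum_congr rfl fun ω _ => ?_
  simp only [Prod.mk.injEq]
  by_cases hz : C ω = z
  · simp only [hz, and_true]
    by_cases hy : g (B ω) = y
    · have hmem : B ω ∈ Finset.univ.filter (fun b => g b = y) :=
        Finset.mem_filter.mpr ⟨Finset.mem_univ _, hy⟩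
      rw [if_pos hy, Finset.sum_ite_eq, if_pos hmem]
    · rw [if_neg hy]
      refine (Finset.sum_eq_zero fun b hb => ?_).symm
      exact if_neg (fun hbb => hy (by rw [hbb]; exact (Finset.mem_filter.mp hb).2))
  · rw [if_neg (by tauto)]
    refine (Finset.sum_eq_zero fun b hb => ?_).symm
    exact if_neg (by tauto)

lemma prEq_comp_snd3 {α β β' γ : Type} [Fintype β] (p : Ω → ℝ)
    (A : Ω → α) (B : Ω → β) (C : Ω → γ) (g : β → β') (x : α) (y : β') (z : γ) :
    prEq p (fun ω => (A ω, g (B ω), C ω)) (x, y, z)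
      = ∑ b ∈ Finset.univ.filter (fun b => g b = y), prEq p (fun ω => (A ω, B ω, C ω)) (x, b, z) := by
  unfold prEq
  rw [Finset.sum_comm]
  refine Finset.sum_congr rfl fun ω _ => ?_
  simp only [Prod.mk.injEq]
  by_cases hxz : A ω = x ∧ C ω = z
  · simp only [hxz.1, hxz.2, true_and, and_true]
    by_cases hy : g (B ω) = y
    · have hmem : B ω ∈ Finset.univ.filter (fun b => g b = y) :=
        Finset.mem_filter.mpr ⟨Finset.mem_univ _, hy⟩
      rw [if_pos hy, Finset.sum_ite_eq, if_pos hmem]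
    · rw [if_neg hy]
      refine (Finset.sum_eq_zero fun b hb => ?_).symm
      exact if_neg (fun hbb => hy (by rw [hbb]; exact (Finset.mem_filter.mp hb).2))
  · rw [if_neg (by tauto)]
    refine (Finset.sum_eq_zero fun b hb => ?_).symm
    exact if_neg (by tauto)

lemma prEq_comp_fst3 {α α' β γ : Type} [Fintype α] (p : Ω → ℝ)
    (A : Ω → α) (B : Ω → β) (C : Ω → γ) (f : α → α') (x : α') (y : β) (z : γ) :
    prEq p (fun ω => (f (A ω), B ω, C ω)) (x, y, z)
      = ∑ a ∈ Finset.univ.filter (fun a => f a = x), prEq p (fun ω => (A ω, B ω, C ω)) (a, y, z) := by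
  unfold prEq
  rw [Finset.sum_comm]
  refine Finset.sum_congr rfl fun ω _ => ?_
  simp only [Prod.mk.injEq]
  by_cases hyz : B ω = y ∧ C ω = z
  · simp only [hyz.1, hyz.2, and_true, true_and]
    by_cases hx : f (A ω) = x
    · have hmem : A ω ∈ Finset.univ.filter (fun a => f a = x) :=
        Finset.mem_filter.mpr ⟨Finset.mem_univ _, hx⟩
      rw [if_pos hx, Finset.sum_ite_eq, if_pos hmem]
    · rw [if_neg hx]
      refine (Finset.sum_eq_zero fun a ha => ?_).symm
      exact if_neg (fun haa => hx (by rw [haa]; exact (Finset.mem_filter.mp ha).2))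
  · rw [if_neg (by tauto)]
    refine (Finset.sum_eq_zero fun a ha => ?_).symm
    exact if_neg (by tauto)

lemma CondIndep.comp_snd {α β β' γ : Type} [Fintype β] {p : Ω → ℝ}
    {A : Ω → α} {B : Ω → β} {C : Ω → γ} (h : CondIndep p A B C) (g : β → β') :
    CondIndep p A (fun ω => g (B ω)) C := by
  intro x y z
  show prEq p (fun ω => (A ω, g (B ω), C ω)) (x, y, z) * prEq p C z
      = prEq p (fun ω => (A ω, C ω)) (x, z) * prEq p (fun ω => (g (B ω), C ω)) (y, z)
  rw [prEq_comp_snd3 p A B C g x y z, prEq_comp_fst2 p B C g y z, Finset.sum_mul, Finset.mul_sum]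
  exact Finset.sum_congr rfl fun b _ => h x b z

lemma CondIndep.comp_fst {α α' β γ : Type} [Fintype α] {p : Ω → ℝ}
    {A : Ω → α} {B : Ω → β} {C : Ω → γ} (h : CondIndep p A B C) (f : α → α') :
    CondIndep p (fun ω => f (A ω)) B C := by
  intro x y z
  show prEq p (fun ω => (f (A ω), B ω, C ω)) (x, y, z) * prEq p C z
      = prEq p (fun ω => (f (A ω), C ω)) (x, z) * prEq p (fun ω => (B ω, C ω)) (y, z)
  rw [prEq_comp_fst3 p A B C f x y z, prEq_comp_fst2 p A C f x z, Finset.sum_mul, Finset.sum_mul]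
  exact Finset.sum_congr rfl fun a _ => h a y z

lemma pure_ci_ent {α β γ : Type} [Fintype α] [Fintype β] [Fintype γ]
    (q : α → β → γ → ℝ) (s : α → γ → ℝ) (t : β → γ → ℝ) (r : γ → ℝ)
    (hq0 : ∀ a b c, 0 ≤ q a b c)
    (hms : ∀ a c, ∑ b, q a b c = s a c)
    (hmt : ∀ b c, ∑ a, q a b c = t b c)
    (hmr : ∀ c, ∑ b, t b c = r c)
    (hci : ∀ a b c, q a b c * r c = s a c * t b c) :
    (∑ a, ∑ b, ∑ c, Real.negMulLog (q a b c)) + ∑ c, Real.negMulLog (r c)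
      = (∑ a, ∑ c, Real.negMulLog (s a c)) + ∑ b, ∑ c, Real.negMulLog (t b c) := by
  have key : ∀ a b c,
      q a b c * Real.log (q a b c) + q a b c * Real.log (r c)
        = q a b c * Real.log (s a c) + q a b c * Real.log (t b c) := by
    intro a b c
    rcases eq_or_lt_of_le (hq0 a b c) with hq | hq
    · simp [← hq]
    · have hs : 0 < s a c := lt_of_lt_of_le hq
        (by rw [← hms a c]; exact Finset.single_le_sum (fun b _ => hq0 a b c) (Finset.mem_univ b))
      have ht : 0 < t b c := lt_of_lt_of_le hq
        (by rw [← hmt b c]; exact Finset.single_le_sum (fun a _ => hq0 a b c) (Finset.mem_univ a))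
      have ht0 : ∀ b', 0 ≤ t b' c := by
        intro b'; rw [← hmt b' c]; exact Finset.sum_nonneg fun a _ => hq0 a b' c
      have hr : 0 < r c := lt_of_lt_of_le ht
        (by rw [← hmr c]; exact Finset.single_le_sum (fun b' _ => ht0 b') (Finset.mem_univ b))
      have hlog : Real.log (q a b c) + Real.log (r c) = Real.log (s a c) + Real.log (t b c) := by
        rw [← Real.log_mul hq.ne' hr.ne', ← Real.log_mul hs.ne' ht.ne', hci a b c]
      linear_combination (q a b c) * hlog
  -- rewrite the four entropy sums as triple sums
  have T0 : (∑ a, ∑ b, ∑ c, Real.negMulLog (q a b c))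
      = -∑ a, ∑ b, ∑ c, q a b c * Real.log (q a b c) := by
    simp [Real.negMulLog, Finset.sum_neg_distrib, neg_mul]
  have T1 : (∑ c, Real.negMulLog (r c)) = -∑ a, ∑ b, ∑ c, q a b c * Real.log (r c) := by
    have h1 : ∀ c, r c * Real.log (r c) = ∑ a, ∑ b, q a b c * Real.log (r c) := by
      intro c
      rw [Finset.sum_comm]
      have : ∀ b, ∑ a, q a b c * Real.log (r c) = t b c * Real.log (r c) := by
        intro b; rw [← Finset.sum_mul, hmt]
      rw [Finset.sum_congr rfl fun b _ => this b, ← Finset.sum_mul, hmr]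
    have h2 : ∑ c, ∑ a, ∑ b, q a b c * Real.log (r c)
        = ∑ a, ∑ b, ∑ c, q a b c * Real.log (r c) := by
      rw [Finset.sum_comm]
      exact Finset.sum_congr rfl fun a _ => Finset.sum_comm
    simp only [Real.negMulLog, neg_mul, h1]
    rw [← h2, ← Finset.sum_neg_distrib]
  have T2 : (∑ a, ∑ c, Real.negMulLog (s a c)) = -∑ a, ∑ b, ∑ c, q a b c * Real.log (s a c) := by
    rw [← Finset.sum_neg_distrib]
    refine Finset.sum_congr rfl fun a _ => ?_
    have h1 : ∀ c, s a c * Real.log (s a c) = ∑ b, q a b c * Real.log (s a c) := by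
      intro c; rw [← Finset.sum_mul, hms]
    have h2 : ∑ c, ∑ b, q a b c * Real.log (s a c) = ∑ b, ∑ c, q a b c * Real.log (s a c) :=
      Finset.sum_comm
    rw [← h2, ← Finset.sum_neg_distrib]
    exact Finset.sum_congr rfl fun c _ => by rw [Real.negMulLog, neg_mul, h1 c]
  have T3 : (∑ b, ∑ c, Real.negMulLog (t b c)) = -∑ a, ∑ b, ∑ c, q a b c * Real.log (t b c) := by
    have h2 : ∑ a, ∑ b, ∑ c, q a b c * Real.log (t b c)
        = ∑ b, ∑ c, ∑ a, q a b c * Real.log (t b c) := by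
      rw [Finset.sum_comm]
      exact Finset.sum_congr rfl fun b _ => Finset.sum_comm
    rw [h2, ← Finset.sum_neg_distrib]
    refine Finset.sum_congr rfl fun b _ => ?_
    rw [← Finset.sum_neg_distrib]
    refine Finset.sum_congr rfl fun c _ => ?_
    rw [Real.negMulLog, neg_mul, ← Finset.sum_mul, hmt]
  rw [T0, T1, T2, T3]
  have main : ∑ a, ∑ b, ∑ c, (q a b c * Real.log (q a b c) + q a b c * Real.log (r c))
      = ∑ a, ∑ b, ∑ c, (q a b c * Real.log (s a c) + q a b c * Real.log (t b c)) :=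
    Finset.sum_congr rfl fun a _ => Finset.sum_congr rfl fun b _ =>
      Finset.sum_congr rfl fun c _ => key a b c
  simp only [Finset.sum_add_distrib] at main
  linarith [main]

lemma ent_comp {α β : Type} [Fintype α] [Fintype β] (p : Ω → ℝ) (W : Ω → α)
    (f : α → β) (hf : Function.Injective f) :
    ent p (fun ω => f (W ω)) = ent p W := by
  have h1 : ∀ a, prEq p (fun ω => f (W ω)) (f a) = prEq p W a := by
    intro a; unfold prEq
    refine Finset.sum_congr rfl fun ω _ => ?_
    simp [hf.eq_iff]
  have h2 : ∀ b, b ∉ Finset.univ.image f → prEq p (fun ω => f (W ω)) b = 0 := by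
    intro b hb
    refine Finset.sum_eq_zero fun ω _ => ?_
    have : f (W ω) ≠ b := fun h => hb (Finset.mem_image.mpr ⟨W ω, Finset.mem_univ _, h⟩)
    simp [this]
  unfold ent
  rw [← Finset.sum_subset (Finset.subset_univ (Finset.univ.image f))
    (fun b _ hb => by rw [h2 b hb]; simp [Real.negMulLog])]
  rw [Finset.sum_image (fun a _ b _ h => hf h)]
  exact Finset.sum_congr rfl fun a _ => by rw [h1]

lemma condIndep_ent {α β γ : Type} [Fintype α] [Fintype β] [Fintype γ]
    (p : Ω → ℝ) (hp : ∀ ω, 0 ≤ p ω)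
    (A : Ω → α) (B : Ω → β) (C : Ω → γ) (h : CondIndep p A B C) :
    ent p (fun ω => (A ω, B ω, C ω)) + ent p C
      = ent p (fun ω => (A ω, C ω)) + ent p (fun ω => (B ω, C ω)) := by
  have E1 : ent p (fun ω => (A ω, B ω, C ω))
      = ∑ a, ∑ b, ∑ c, Real.negMulLog (prEq p (fun ω => (A ω, B ω, C ω)) (a, b, c)) := by
    rw [ent, Fintype.sum_prod_type]
    exact Finset.sum_congr rfl fun a _ => Fintype.sum_prod_type _
  have E2 : ent p (fun ω => (A ω, C ω))
      = ∑ a, ∑ c, Real.negMulLog (prEq p (fun ω => (A ω, C ω)) (a, c)) := by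
    rw [ent]; exact Fintype.sum_prod_type _
  have E3 : ent p (fun ω => (B ω, C ω))
      = ∑ b, ∑ c, Real.negMulLog (prEq p (fun ω => (B ω, C ω)) (b, c)) := by
    rw [ent]; exact Fintype.sum_prod_type _
  rw [E1, E2, E3, ent]
  exact pure_ci_ent
    (fun a b c => prEq p (fun ω => (A ω, B ω, C ω)) (a, b, c))
    (fun a c => prEq p (fun ω => (A ω, C ω)) (a, c))
    (fun b c => prEq p (fun ω => (B ω, C ω)) (b, c))
    (fun c => prEq p C c)
    (fun a b c => prEq_nonneg p hp _ _)
    (fun a c => sum_prEq_snd3 p A B C a c)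
    (fun b c => sum_prEq_fst3 p A B C b c)
    (fun c => sum_prEq_pair p B C c)
    (fun a b c => h a b c)

theorem stmt1 {𝓤 𝓥 𝓧 𝓨 𝓩 : Type} [Fintype 𝓤] [Fintype 𝓥] [Fintype 𝓧] [Fintype 𝓨] [Fintype 𝓩]
    (p : Ω → ℝ) (hp : IsPMF p)
    (U : Ω → 𝓤) (V : Ω → 𝓥) (X : Ω → 𝓧) (Y : Ω → 𝓨) (Z : Ω → 𝓩)
    (hmc1 : CondIndep p U (fun ω => (X ω, Y ω, Z ω)) V)
    (hmc2 : CondIndep p (fun ω => (U ω, V ω)) (fun ω => (Y ω, Z ω)) X) :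
    condMutInf p Y V U - condMutInf p Z V U + condEnt p X (fun ω => (Z ω, V ω)) =
      condEnt p X (fun ω => (Z ω, U ω)) - condMutInf p X V (fun ω => (Y ω, U ω)) := by
  have hp0 := hp.1
  have h_i : CondIndep p U Z V := hmc1.comp_snd (fun t => t.2.2)
  have h_ii : CondIndep p U (fun ω => (X ω, Y ω)) V := hmc1.comp_snd (fun t => (t.1, t.2.1))
  have h_iii : CondIndep p V Z X := (hmc2.comp_fst (fun t => t.2)).comp_snd (fun t => t.2)
  have h_iv : CondIndep p U Z X := (hmc2.comp_fst (fun t => t.1)).comp_snd (fun t => t.2)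
  have h_v : CondIndep p V Y X := (hmc2.comp_fst (fun t => t.2)).comp_snd (fun t => t.1)
  have h_vi : CondIndep p U Y X := (hmc2.comp_fst (fun t => t.1)).comp_snd (fun t => t.1)
  have E_i := condIndep_ent p hp0 U Z V h_i
  have E_ii := condIndep_ent p hp0 U (fun ω => (X ω, Y ω)) V h_ii
  have E_iii := condIndep_ent p hp0 V Z X h_iii
  have E_iv := condIndep_ent p hp0 U Z X h_iv
  have E_v := condIndep_ent p hp0 V Y X h_v
  have E_vi := condIndep_ent p hp0 U Y X h_vi
  have b1 : ent p (fun ω => (Y ω, (V ω, U ω))) = ent p (fun ω => (V ω, (Y ω, U ω))) := by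
    have := ent_comp p (fun ω => (Y ω, (V ω, U ω))) (fun t => (t.2.1, (t.1, t.2.2)))
      (by rintro ⟨a1, a2, a3⟩ ⟨b1, b2, b3⟩ h; simp only [Prod.mk.injEq] at h ⊢; tauto)
    exact this.symm
  have b2 : ent p (fun ω => (U ω, Z ω, V ω)) = ent p (fun ω => (Z ω, (V ω, U ω))) := by
    have := ent_comp p (fun ω => (U ω, Z ω, V ω)) (fun t => (t.2.1, (t.2.2, t.1)))
      (by rintro ⟨a1, a2, a3⟩ ⟨b1, b2, b3⟩ h; simp only [Prod.mk.injEq] at h ⊢; tauto)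
    exact this.symm
  have b3 : ent p (fun ω => (U ω, (X ω, Y ω), V ω)) = ent p (fun ω => (X ω, (V ω, (Y ω, U ω)))) := by
    have := ent_comp p (fun ω => (U ω, (X ω, Y ω), V ω))
      (fun t => (t.2.1.1, (t.2.2, (t.2.1.2, t.1))))
      (by rintro ⟨a1, ⟨a2, a3⟩, a4⟩ ⟨b1, ⟨b2, b3⟩, b4⟩ h; simp only [Prod.mk.injEq] at h ⊢; tauto)
    exact this.symm
  have b4 : ent p (fun ω => ((X ω, Y ω), V ω)) = ent p (fun ω => (V ω, Y ω, X ω)) := by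
    have := ent_comp p (fun ω => ((X ω, Y ω), V ω)) (fun t => (t.2, t.1.2, t.1.1))
      (by rintro ⟨⟨a1, a2⟩, a3⟩ ⟨⟨b1, b2⟩, b3⟩ h; simp only [Prod.mk.injEq] at h ⊢; tauto)
    exact this.symm
  have b5 : ent p (fun ω => (V ω, Z ω, X ω)) = ent p (fun ω => (X ω, (Z ω, V ω))) := by
    have := ent_comp p (fun ω => (V ω, Z ω, X ω)) (fun t => (t.2.2, (t.2.1, t.1)))
      (by rintro ⟨a1, a2, a3⟩ ⟨b1, b2, b3⟩ h; simp only [Prod.mk.injEq] at h ⊢; tauto)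
    exact this.symm
  have b6 : ent p (fun ω => (U ω, Z ω, X ω)) = ent p (fun ω => (X ω, (Z ω, U ω))) := by
    have := ent_comp p (fun ω => (U ω, Z ω, X ω)) (fun t => (t.2.2, (t.2.1, t.1)))
      (by rintro ⟨a1, a2, a3⟩ ⟨b1, b2, b3⟩ h; simp only [Prod.mk.injEq] at h ⊢; tauto)
    exact this.symm
  have b7 : ent p (fun ω => (U ω, Y ω, X ω)) = ent p (fun ω => (X ω, (Y ω, U ω))) := by
    have := ent_comp p (fun ω => (U ω, Y ω, X ω)) (fun t => (t.2.2, (t.2.1, t.1)))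
      (by rintro ⟨a1, a2, a3⟩ ⟨b1, b2, b3⟩ h; simp only [Prod.mk.injEq] at h ⊢; tauto)
    exact this.symm
  simp only [condMutInf, condEnt]
  linarith [E_i, E_ii, E_iii, E_iv, E_v, E_vi, b1, b2, b3, b4, b5, b6, b7]
end

section
/- Let (X_1,Y_1,Z_1),…,(X_n,Y_n,Z_n) be i.i.d. finite random vectors and M a finite random variable such that M → X^n → (Y^n, Z^n) is a Markov chain. Then I(Z^n; M) − I(Y^n; M) = ∑_{i=1}^n [ I(Z_i; U_i) − I(Y_i; U_i) ], where U_i := (Y_{i+1}^n, Z^{i-1}, M). -/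
open scoped BigOperators Classical

variable {Ω : Type} [Fintype Ω]

/-- The random variables `W 0, …, W (n-1)` are i.i.d. with common marginal `q`. -/
def IID {α : Type} {n : ℕ} (p : Ω → ℝ) (W : Fin n → Ω → α) : Prop :=
  ∃ q : α → ℝ,
    (∀ w : Fin n → α, prEq p (fun ω => (fun i => W i ω)) w = ∏ i, q (w i)) ∧
    (∀ i x, prEq p (W i) x = q x)

/-- The tuple `(Y_{i+1}, …, Y_n)`, encoded as an `Option`-masked vector. -/
def fut {n : ℕ} {α : Type} (Y : Fin n → Ω → α) (i : Fin n) : Ω → (Fin n → Option α) :=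
  fun ω j => if i < j then some (Y j ω) else none

/-- The tuple `(Z_1, …, Z_{i-1})`, encoded as an `Option`-masked vector. -/
def past {n : ℕ} {α : Type} (Z : Fin n → Ω → α) (i : Fin n) : Ω → (Fin n → Option α) :=
  fun ω j => if j < i then some (Z j ω) else none


/-!
Let `G k = H(Y_{k+1}^n, Z^k, M)`. The pairs `(Y_i, U_i)` and `(Z_i, U_i)` carry the same
information as the hybrids indexed by `i - 1` and `i`, so the `i`-th summand equals
`H(Z_i) - H(Y_i) + G (i - 1) - G i`, and the sum telescopes to
`∑ H(Z_i) - ∑ H(Y_i) + H(Y^n, M) - H(Z^n, M)`. Because the coordinates are i.i.d.,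
`H(Z^n) = ∑ H(Z_i)` and `H(Y^n) = ∑ H(Y_i)`, which is `I(Z^n; M) - I(Y^n; M)`.
-/

lemma prEq_comp {α β : Type} [Fintype α] (p : Ω → ℝ) (T : Ω → α) (g : α → β) (b : β) :
    prEq p (fun ω => g (T ω)) b = ∑ a, if g a = b then prEq p T a else 0 := by
  simp only [prEq, Finset.ite_sum_zero]
  rw [Finset.sum_comm]
  refine Finset.sum_congr rfl fun ω _ => ?_
  rw [Finset.sum_eq_single (T ω)] <;> simp +contextual [eq_comm]

lemma sum_prEq {α : Type} [Fintype α] (p : Ω → ℝ) (X : Ω → α) :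
    ∑ x, prEq p X x = ∑ ω, p ω := by
  simp only [prEq]
  rw [Finset.sum_comm]
  simp

lemma ent_eq_neg_sum_mul_log {α : Type} [Fintype α] (p : Ω → ℝ) (X : Ω → α) :
    ent p X = -∑ ω, p ω * Real.log (prEq p X (X ω)) := by
  simp only [ent, Real.negMulLog, neg_mul, Finset.sum_neg_distrib, neg_inj]
  conv_lhs => enter [2, x, 1]; rw [prEq]
  simp only [Finset.sum_mul, ite_mul, zero_mul]
  rw [Finset.sum_comm]
  simp

lemma ent_congr_ker {α β : Type} [Fintype α] [Fintype β] (p : Ω → ℝ) {X : Ω → α} {X' : Ω → β}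
    (h : ∀ ω ω', X ω' = X ω ↔ X' ω' = X' ω) : ent p X = ent p X' := by
  simp only [ent_eq_neg_sum_mul_log, prEq, h]

lemma sum_negMulLog_mul {α β : Type} [Fintype α] [Fintype β] {a : α → ℝ} {b : β → ℝ}
    (ha : ∑ x, a x = 1) (hb : ∑ y, b y = 1) :
    ∑ x, ∑ y, Real.negMulLog (a x * b y) =
      ∑ x, Real.negMulLog (a x) + ∑ y, Real.negMulLog (b y) := by
  simp only [Real.negMulLog_mul, Finset.sum_add_distrib, ← Finset.sum_mul, ← Finset.mul_sum, hb,
    ha, one_mul]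

lemma sum_negMulLog_prod {α : Type} [Fintype α] :
    ∀ {n : ℕ} (q : Fin n → α → ℝ), (∀ i, ∑ x, q i x = 1) →
      ∑ w : Fin n → α, Real.negMulLog (∏ i, q i (w i)) = ∑ i, ∑ x, Real.negMulLog (q i x)
  | 0, _, _ => by simp
  | n + 1, q, hq => by
    rw [← (Fin.consEquiv fun _ => α).sum_comp, Fintype.sum_prod_type]
    simp only [Fin.consEquiv_apply, Fin.prod_univ_succ, Fin.cons_zero, Fin.cons_succ]
    rw [sum_negMulLog_mul (hq 0), sum_negMulLog_prod (fun i => q i.succ) (fun i => hq i.succ),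
      Fin.sum_univ_succ]
    rw [← Fintype.prod_sum]
    exact Finset.prod_eq_one fun i _ => hq i.succ

lemma IID.comp {𝓣 β : Type} [Fintype 𝓣] {n : ℕ} {p : Ω → ℝ} {W : Fin n → Ω → 𝓣}
    (hW : IID p W) (π : 𝓣 → β) : IID p (fun i ω => π (W i ω)) := by
  obtain ⟨q, hjoint, hmarg⟩ := hW
  refine ⟨fun b => ∑ t, if π t = b then q t else 0, fun v => ?_, fun i b => ?_⟩
  · rw [prEq_comp p (fun ω i => W i ω) (fun w i => π (w i)), Fintype.prod_sum]
    refine Finset.sum_congr rfl fun w _ => ?_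
    simp only [hjoint, Finset.prod_ite_zero, funext_iff, Finset.mem_univ, true_implies]
  · simp only [prEq_comp p (W i) π, hmarg]

lemma ent_pi_of_iid {α : Type} [Fintype α] {n : ℕ} {p : Ω → ℝ} (hp : ∑ ω, p ω = 1)
    {W : Fin n → Ω → α} (hW : IID p W) :
    ent p (fun ω i => W i ω) = ∑ i, ent p (W i) := by
  obtain ⟨q, hjoint, hmarg⟩ := hW
  have hq : ∀ i : Fin n, ∑ x, q x = 1 := fun i => by
    simp only [← hmarg i, sum_prEq, hp]
  simp only [ent, hjoint, hmarg, sum_negMulLog_prod (fun _ => q) hq]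

lemma forall_ge_iff_and_forall_gt {ι : Type*} [LinearOrder ι] {P : ι → Prop} {i : ι} :
    (∀ j, i ≤ j → P j) ↔ P i ∧ ∀ j, i < j → P j := by
  refine ⟨fun h => ⟨h i le_rfl, fun j hj => h j hj.le⟩, fun ⟨hi, h⟩ j hj => ?_⟩
  rcases hj.eq_or_lt with rfl | hj
  exacts [hi, h j hj]

lemma forall_le_iff_and_forall_lt {ι : Type*} [LinearOrder ι] {P : ι → Prop} {i : ι} :
    (∀ j, j ≤ i → P j) ↔ P i ∧ ∀ j, j < i → P j :=
  forall_ge_iff_and_forall_gt (ι := ιᵒᵈ)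

lemma ite_some_none_eq_iff {α : Type*} (c : Prop) [Decidable c] (a b : α) :
    ((if c then some a else none) = if c then some b else none) ↔ (c → a = b) := by
  by_cases hc : c <;> simp [hc]

section Hybrid

variable {n : ℕ} {𝓨 𝓩 𝓜 : Type} [Fintype 𝓨] [Fintype 𝓩] [Fintype 𝓜] (p : Ω → ℝ)
  (Y : Fin n → Ω → 𝓨) (Z : Fin n → Ω → 𝓩) (M : Ω → 𝓜)

/-- `H(Y_{k+1}, …, Y_n, Z_1, …, Z_k, M)` in the paper's 1-based indexing. -/
noncomputable def hybridEnt (k : ℕ) : ℝ :=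
  ent p fun ω => (fun j : Fin n => if k ≤ j.val then some (Y j ω) else none,
    fun j : Fin n => if j.val < k then some (Z j ω) else none, M ω)

lemma hybridEnt_zero : hybridEnt p Y Z M 0 = ent p (fun ω => (fun i => Y i ω, M ω)) :=
  ent_congr_ker p fun ω ω' => by simp [funext_iff]

lemma hybridEnt_self : hybridEnt p Y Z M n = ent p (fun ω => (fun i => Z i ω, M ω)) :=
  ent_congr_ker p fun ω ω' => by simp [funext_iff, Nat.not_le.mpr]

lemma hybridEnt_val (i : Fin n) :
    hybridEnt p Y Z M i = ent p (fun ω => (Y i ω, fut Y i ω, past Z i ω, M ω)) := by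
  refine ent_congr_ker p fun ω ω' => ?_
  simp only [Prod.mk.injEq, fut, past, funext_iff, ite_some_none_eq_iff, Fin.val_fin_le,
    Fin.val_fin_lt, forall_ge_iff_and_forall_gt, and_assoc]

lemma hybridEnt_succ (i : Fin n) :
    hybridEnt p Y Z M (i + 1) = ent p (fun ω => (Z i ω, fut Y i ω, past Z i ω, M ω)) := by
  refine ent_congr_ker p fun ω ω' => ?_
  simp only [Prod.mk.injEq, fut, past, funext_iff, ite_some_none_eq_iff, Nat.succ_le_iff,
    Nat.lt_succ_iff, Fin.val_fin_le, Fin.val_fin_lt, forall_le_iff_and_forall_lt]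
  tauto

end Hybrid

theorem stmt7_general {n : ℕ} {𝓧 𝓨 𝓩 𝓜 : Type} [Fintype 𝓧] [Fintype 𝓨] [Fintype 𝓩] [Fintype 𝓜]
    (p : Ω → ℝ) (hp : IsPMF p)
    (X : Fin n → Ω → 𝓧) (Y : Fin n → Ω → 𝓨) (Z : Fin n → Ω → 𝓩) (M : Ω → 𝓜)
    (hiid : IID p (fun i ω => (X i ω, Y i ω, Z i ω))) :
    mutInf p (fun ω => fun i => Z i ω) M - mutInf p (fun ω => fun i => Y i ω) M =
      ∑ i, (mutInf p (Z i) (fun ω => (fut Y i ω, past Z i ω, M ω)) -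
            mutInf p (Y i) (fun ω => (fut Y i ω, past Z i ω, M ω))) := by
  set G := hybridEnt p Y Z M with hG
  have hZ : ent p (fun ω i => Z i ω) = ∑ i, ent p (Z i) :=
    ent_pi_of_iid hp.2 (hiid.comp fun t => t.2.2)
  have hY : ent p (fun ω i => Y i ω) = ∑ i, ent p (Y i) :=
    ent_pi_of_iid hp.2 (hiid.comp fun t => t.2.1)
  have htelescope : ∑ i : Fin n, (G i - G (i + 1)) = G 0 - G n := by
    rw [Fin.sum_univ_eq_sum_range (fun k => G k - G (k + 1)), Finset.sum_range_sub']
  calc _ = ∑ i, ent p (Z i) - ∑ i, ent p (Y i) + (G 0 - G n) := by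
        rw [hG, hybridEnt_zero, hybridEnt_self, ← hZ, ← hY, mutInf, mutInf]
        ring
    _ = ∑ i : Fin n, (ent p (Z i) - ent p (Y i) + (G i - G (i + 1))) := by
        rw [Finset.sum_add_distrib, Finset.sum_sub_distrib, htelescope]
    _ = _ := Finset.sum_congr rfl fun i _ => by
        rw [mutInf, mutInf, hG, hybridEnt_val, hybridEnt_succ]
        ring

theorem stmt7 {n : ℕ} {𝓧 𝓨 𝓩 𝓜 : Type} [Fintype 𝓧] [Fintype 𝓨] [Fintype 𝓩] [Fintype 𝓜]
    (p : Ω → ℝ) (hp : IsPMF p)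
    (X : Fin n → Ω → 𝓧) (Y : Fin n → Ω → 𝓨) (Z : Fin n → Ω → 𝓩) (M : Ω → 𝓜)
    (hiid : IID p (fun i ω => (X i ω, Y i ω, Z i ω)))
    (hmc : CondIndep p M (fun ω => (fun i => Y i ω, fun i => Z i ω))
      (fun ω => fun i => X i ω)) :
    mutInf p (fun ω => fun i => Z i ω) M - mutInf p (fun ω => fun i => Y i ω) M =
      ∑ i, (mutInf p (Z i) (fun ω => (fut Y i ω, past Z i ω, M ω)) -
            mutInf p (Y i) (fun ω => (fut Y i ω, past Z i ω, M ω))) :=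
  stmt7_general p hp X Y Z M hiid
end

section
/- Let X, V, Y, U, Z be finite random variables with the Markov chain U → V → X → (Y,Z). Then H(X|Z,U) − I(X;V|Y,U) − H(X|Z,V) = I(Y;V|U) − I(Z;V|U). -/
open scoped BigOperators Classical

variable {Ω : Type} [Fintype Ω]

/-! Every entropy is an expectation, `H(W) = -∑ ω, p ω * log P(W = W ω)`, so it depends only on
the partition of `Ω` induced by `W` and tuples may be regrouped freely. Taking logarithms in
`P(a,b,c) P(c) = P(a,c) P(b,c)` at the observed values shows that `A ⊥ B | C` gives
`H(C,A,B) + H(C) = H(C,A) + H(C,B)`. The Markov chain supplies six such independences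
(`Z ⊥ U`, `Y ⊥ U`, `Y ⊥ (V,U)`, `Z ⊥ V` given `X`; `Z ⊥ U`, `X ⊥ U` given `V`), and once both sides
are expanded into joint entropies the identity is a linear combination of them. -/

section

variable {α β γ δ ε : Type} {p : Ω → ℝ}

lemma prEq_congr {W₁ : Ω → α} {W₂ : Ω → β} {w₁ : α} {w₂ : β}
    (h : ∀ ω, W₁ ω = w₁ ↔ W₂ ω = w₂) : prEq p W₁ w₁ = prEq p W₂ w₂ :=
  Finset.sum_congr rfl fun ω _ => by simp only [h ω]

lemma le_prEq_self (hp : ∀ ω, 0 ≤ p ω) (W : Ω → α) (ω : Ω) : p ω ≤ prEq p W (W ω) := by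
  unfold prEq
  simpa using Finset.single_le_sum (f := fun ω' => if W ω' = W ω then p ω' else 0)
    (fun ω' _ => by split_ifs; exacts [hp ω', le_rfl]) (Finset.mem_univ ω)

lemma prEq_map_fst [Fintype α] (f : α → β) (A : Ω → α) (D : Ω → δ) (x : β) (d : δ) :
    prEq p (fun ω => (f (A ω), D ω)) (x, d) =
      ∑ a with f a = x, prEq p (fun ω => (A ω, D ω)) (a, d) := by
  unfold prEq
  rw [Finset.sum_comm]
  refine Finset.sum_congr rfl fun ω _ => ?_
  by_cases hd : D ω = d <;> simp [Finset.sum_ite_eq, hd]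

lemma ent_eq_neg_sum [Fintype α] (p : Ω → ℝ) (W : Ω → α) :
    ent p W = -∑ ω, p ω * Real.log (prEq p W (W ω)) := by
  have hx : ∀ x, Real.negMulLog (prEq p W x) =
      -∑ ω, if W ω = x then p ω * Real.log (prEq p W x) else 0 := by
    intro x
    rw [Real.negMulLog, neg_mul]
    nth_rewrite 1 [prEq]
    rw [Finset.sum_mul]
    congr 1
    exact Finset.sum_congr rfl fun ω _ => by split_ifs <;> simp
  simp only [ent, hx, Finset.sum_neg_distrib]
  rw [Finset.sum_comm]
  simp

lemma ent_congr [Fintype α] [Fintype β] {W₁ : Ω → α} {W₂ : Ω → β}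
    (h : ∀ ω ω', W₁ ω' = W₁ ω ↔ W₂ ω' = W₂ ω) : ent p W₁ = ent p W₂ := by
  simp only [ent_eq_neg_sum, prEq_congr (h _)]

lemma ent_comm [Fintype α] [Fintype β] (p : Ω → ℝ) (A : Ω → α) (B : Ω → β) :
    ent p (fun ω => (A ω, B ω)) = ent p (fun ω => (B ω, A ω)) :=
  ent_congr fun _ _ => by simp only [Prod.mk.injEq]; tauto

lemma ent_left_comm [Fintype α] [Fintype β] [Fintype γ]
    (p : Ω → ℝ) (A : Ω → α) (B : Ω → β) (C : Ω → γ) :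
    ent p (fun ω => (A ω, B ω, C ω)) = ent p (fun ω => (B ω, A ω, C ω)) :=
  ent_congr fun _ _ => by simp only [Prod.mk.injEq]; tauto

namespace CondIndep

variable {A : Ω → α} {B : Ω → β} {C : Ω → γ}

lemma symm (h : CondIndep p A B C) : CondIndep p B A C := by
  intro b a c
  rw [prEq_congr (W₂ := fun ω => (A ω, B ω, C ω)) (w₂ := (a, b, c))
    (fun _ => by simp only [Prod.mk.injEq]; tauto), h a b c, mul_comm]

lemma comp_left [Fintype α] (f : α → δ) (h : CondIndep p A B C) :
    CondIndep p (fun ω => f (A ω)) B C := by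
  intro x b c
  calc prEq p (fun ω => (f (A ω), B ω, C ω)) (x, b, c) * prEq p C c
      = ∑ a with f a = x, prEq p (fun ω => (A ω, B ω, C ω)) (a, b, c) * prEq p C c := by
        rw [prEq_map_fst, Finset.sum_mul]
    _ = ∑ a with f a = x, prEq p (fun ω => (A ω, C ω)) (a, c) *
          prEq p (fun ω => (B ω, C ω)) (b, c) :=
        Finset.sum_congr rfl fun a _ => h a b c
    _ = prEq p (fun ω => (f (A ω), C ω)) (x, c) * prEq p (fun ω => (B ω, C ω)) (b, c) := by
        rw [prEq_map_fst f A C x c, Finset.sum_mul]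

lemma comp_right [Fintype β] (g : β → δ) (h : CondIndep p A B C) :
    CondIndep p A (fun ω => g (B ω)) C :=
  (h.symm.comp_left g).symm

lemma comp [Fintype α] [Fintype β] (f : α → δ) (g : β → ε) (h : CondIndep p A B C) :
    CondIndep p (fun ω => f (A ω)) (fun ω => g (B ω)) C :=
  (h.comp_left f).comp_right g

lemma ent_add_ent [Fintype α] [Fintype β] [Fintype γ] (h : CondIndep p A B C)
    (hp : ∀ ω, 0 ≤ p ω) :
    ent p (fun ω => (C ω, A ω, B ω)) + ent p C =
      ent p (fun ω => (C ω, A ω)) + ent p (fun ω => (C ω, B ω)) := by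
  suffices hω : ∀ ω, p ω * Real.log (prEq p (fun ω => (C ω, A ω, B ω)) (C ω, A ω, B ω)) +
      p ω * Real.log (prEq p C (C ω)) =
        p ω * Real.log (prEq p (fun ω => (C ω, A ω)) (C ω, A ω)) +
          p ω * Real.log (prEq p (fun ω => (C ω, B ω)) (C ω, B ω)) by
    simp only [ent_eq_neg_sum]
    rw [← neg_add, ← neg_add, ← Finset.sum_add_distrib, ← Finset.sum_add_distrib]
    exact congrArg _ (Finset.sum_congr rfl fun ω _ => hω ω)
  intro ω
  rcases (hp ω).eq_or_lt with hp0 | hpos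
  · simp [← hp0]
  have pos : ∀ {τ : Type} (W : Ω → τ), 0 < prEq p W (W ω) :=
    fun W => hpos.trans_le (le_prEq_self hp W ω)
  have hCAB : prEq p (fun ω => (C ω, A ω, B ω)) (C ω, A ω, B ω) =
      prEq p (fun ω => (A ω, B ω, C ω)) (A ω, B ω, C ω) :=
    prEq_congr fun _ => by simp only [Prod.mk.injEq]; tauto
  have hCA : prEq p (fun ω => (C ω, A ω)) (C ω, A ω) =
      prEq p (fun ω => (A ω, C ω)) (A ω, C ω) :=
    prEq_congr fun _ => by simp only [Prod.mk.injEq]; tauto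
  have hCB : prEq p (fun ω => (C ω, B ω)) (C ω, B ω) =
      prEq p (fun ω => (B ω, C ω)) (B ω, C ω) :=
    prEq_congr fun _ => by simp only [Prod.mk.injEq]; tauto
  have hlog := congrArg Real.log (h (A ω) (B ω) (C ω))
  rw [Real.log_mul (pos _).ne' (pos _).ne', Real.log_mul (pos _).ne' (pos _).ne'] at hlog
  rw [hCAB, hCA, hCB, ← mul_add, ← mul_add, hlog]

end CondIndep

end

theorem stmt16 {𝓤 𝓥 𝓧 𝓨 𝓩 : Type} [Fintype 𝓤] [Fintype 𝓥] [Fintype 𝓧] [Fintype 𝓨] [Fintype 𝓩]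
    (p : Ω → ℝ) (hp : IsPMF p)
    (U : Ω → 𝓤) (V : Ω → 𝓥) (X : Ω → 𝓧) (Y : Ω → 𝓨) (Z : Ω → 𝓩)
    (hmc1 : CondIndep p U (fun ω => (X ω, Y ω, Z ω)) V)
    (hmc2 : CondIndep p (fun ω => (U ω, V ω)) (fun ω => (Y ω, Z ω)) X) :
    condEnt p X (fun ω => (Z ω, U ω)) - condMutInf p X V (fun ω => (Y ω, U ω)) -
        condEnt p X (fun ω => (Z ω, V ω)) =
      condMutInf p Y V U - condMutInf p Z V U := by
  have hZU_X : CondIndep p Z U X := (hmc2.comp Prod.fst Prod.snd).symm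
  have hYU_X : CondIndep p Y U X := (hmc2.comp Prod.fst Prod.fst).symm
  have hYVU_X : CondIndep p Y (fun ω => (V ω, U ω)) X := (hmc2.comp Prod.swap Prod.fst).symm
  have hZV_X : CondIndep p Z V X := (hmc2.comp Prod.snd Prod.snd).symm
  have hZU_V : CondIndep p Z U V := (hmc1.comp_right fun t => t.2.2).symm
  have hXU_V : CondIndep p X U V := (hmc1.comp_right Prod.fst).symm
  have hXVYU : ent p (fun ω => (X ω, V ω, Y ω, U ω)) = ent p (fun ω => (X ω, Y ω, V ω, U ω)) :=
    ent_congr fun _ _ => by simp only [Prod.mk.injEq]; tauto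
  simp only [condMutInf, condEnt]
  linarith [hZU_X.ent_add_ent hp.1, hYU_X.ent_add_ent hp.1, hYVU_X.ent_add_ent hp.1,
    hZV_X.ent_add_ent hp.1, hZU_V.ent_add_ent hp.1, hXU_V.ent_add_ent hp.1,
    ent_comm p Z V, ent_comm p X V, ent_left_comm p V Y U, ent_left_comm p Z V U,
    ent_left_comm p X V U, hXVYU]
end
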